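/- arXiv:1805.03780 — 3 statements merged into one kernel-verified Lean document; each statement's English description precedes it below -/
import Mathlib

section
/- Let q be a complex number with 0 < |q| < 1 and let ζ = e^{iπ/5}. Then Σ_{n∈ℤ} (1−ζ)(1−ζ^{-1})(−1)^n q^{n²+2n} / ((1−ζq^{2n})(1−ζ^{-1}q^{2n})) = 2 Σ_{n∈ℤ} (−1)^n q^{n²+2n}/(1+q^{10n}) + (ζ²−ζ³) · 2 Σ_{n∈ℤ} (−1)^n q^{n²+2n}(q^{2n}−1)/(1+q^{10n}). -/
open scoped BigOperators

/-- The infinite q-Pochhammer symbol `(x; q)_∞ = ∏_{n=0}^∞ (1 - x qⁿ)`. -/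
noncomputable def poch (x q : ℂ) : ℂ := ∏' n : ℕ, (1 - x * q ^ n)

/-- `J_m = (q^m; q^m)_∞`. -/
noncomputable def J (m : ℕ) (q : ℂ) : ℂ := poch (q ^ m) (q ^ m)

/-- `J_{a,m} = (q^a; q^m)_∞ (q^{m-a}; q^m)_∞ (q^m; q^m)_∞`. -/
noncomputable def Jam (a m : ℕ) (q : ℂ) : ℂ :=
  poch (q ^ a) (q ^ m) * poch (q ^ (m - a)) (q ^ m) * poch (q ^ m) (q ^ m)

/-- `ζ = e^{iπ/5}`, a primitive 10th root of unity. -/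
noncomputable def zeta10 : ℂ := Complex.exp (Real.pi * Complex.I / 5)

/-!
Replacing `n` by `-n` does not change a bilateral sum, so it suffices that, with `x = q^{2n}`, the
`n`-th and `(-n)`-th summands on the right add up to twice the `n`-th summand on the left. This is a
rational identity in `x`: for `φ = ζ + ζ⁻¹`, a root of `φ² = φ + 1`, the left summand has
denominator `1 - φx + x²`, a factor of `1 + x⁵ = (1 + x)(1 - φx + x²)(1 + (φ - 1)x + x²)`.
Convergence comes from `‖1 + q^k‖ ≥ 1 - ‖q‖` for every integer `k` and the Gaussian decay of
`q^{n²}`.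
-/

theorem tsum_eq_tsum_of_add_neg_eq_two_mul {K : Type*} [Field K] [TopologicalSpace K]
    [IsTopologicalRing K] [T2Space K] [CharZero K] {f g : ℤ → K} (hg : Summable g)
    (h : ∀ n, g n + g (-n) = 2 * f n) : ∑' n, f n = ∑' n, g n := by
  have hneg : Summable fun n => g (-n) := (Equiv.neg ℤ).summable_iff.2 hg
  have hsym : ∑' n, g (-n) = ∑' n, g n := (Equiv.neg ℤ).tsum_eq g
  calc ∑' n, f n = ∑' n, 2⁻¹ * (g n + g (-n)) := tsum_congr fun n => by
          rw [h, inv_mul_cancel_left₀ two_ne_zero]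
    _ = 2⁻¹ * (∑' n, g n + ∑' n, g (-n)) := by
          rw [tsum_mul_left, hg.tsum_add hneg]
    _ = ∑' n, g n := by rw [hsym]; ring

theorem one_sub_norm_le_norm_one_add_pow {q : ℂ} (hq1 : ‖q‖ < 1) (k : ℕ) :
    1 - ‖q‖ ≤ ‖1 + q ^ k‖ := by
  rcases k.eq_zero_or_pos with rfl | hk
  · norm_num
    linarith [norm_nonneg q]
  · calc 1 - ‖q‖ ≤ ‖(1 : ℂ)‖ - ‖q ^ k‖ := by
          rw [norm_one, norm_pow]
          gcongr
          exact pow_le_of_le_one (norm_nonneg q) hq1.le hk.ne'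
      _ ≤ ‖1 + q ^ k‖ := norm_sub_le_norm_add _ _

theorem one_sub_norm_le_norm_one_add_zpow {q : ℂ} (hq0 : q ≠ 0) (hq1 : ‖q‖ < 1) (k : ℤ) :
    1 - ‖q‖ ≤ ‖1 + q ^ k‖ := by
  obtain ⟨m, rfl | rfl⟩ := Int.eq_nat_or_neg k
  · simpa using one_sub_norm_le_norm_one_add_pow hq1 m
  · have hfac : 1 + q ^ (-(m : ℤ)) = q ^ (-(m : ℤ)) * (1 + q ^ m) := by
      rw [mul_add, mul_one, zpow_neg, zpow_natCast, inv_mul_cancel₀ (pow_ne_zero _ hq0), add_comm]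
    have hbig : 1 ≤ ‖q ^ (-(m : ℤ))‖ := by
      rw [norm_zpow, zpow_neg, zpow_natCast]
      exact one_le_inv₀ (by positivity) |>.2 (pow_le_one₀ (norm_nonneg q) hq1.le)
    calc 1 - ‖q‖ ≤ ‖1 + q ^ m‖ := one_sub_norm_le_norm_one_add_pow hq1 m
      _ ≤ ‖q ^ (-(m : ℤ))‖ * ‖1 + q ^ m‖ := le_mul_of_one_le_left (norm_nonneg _) hbig
      _ = ‖1 + q ^ (-(m : ℤ))‖ := by rw [hfac, norm_mul]

theorem one_add_zpow_ne_zero {q : ℂ} (hq0 : q ≠ 0) (hq1 : ‖q‖ < 1) (k : ℤ) : 1 + q ^ k ≠ 0 :=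
  norm_pos_iff.1 <| (sub_pos.2 hq1).trans_le (one_sub_norm_le_norm_one_add_zpow hq0 hq1 k)

theorem summable_zpow_sq_add {r : ℝ} (hr0 : 0 < r) (hr1 : r < 1) (a : ℤ) :
    Summable fun n : ℤ => r ^ (n ^ 2 + a * n) := by
  have hgeom : Summable fun n : ℤ => r ^ |n| :=
    .of_nat_of_neg (by simpa using summable_geometric_of_lt_one hr0.le hr1)
      (by simpa using summable_geometric_of_lt_one hr0.le hr1)
  refine .of_nonneg_of_le (fun n => by positivity) (fun n => ?_)
    (hgeom.mul_left (r ^ (-(a ^ 2 + 1))))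
  rw [← zpow_add₀ hr0.ne']
  -- `2 (n² + a n + a² + 1 - |n|) = (|n| - 1)² + (n + a)² + a² + 1`
  refine zpow_le_zpow_right_of_le_one₀ hr0 hr1.le ?_
  nlinarith [sq_nonneg (n + a), sq_nonneg (|n| - 1), sq_abs n, sq_nonneg a]

theorem summable_neg_one_zpow_mul_zpow_sq_div {q : ℂ} (hq0 : q ≠ 0) (hq1 : ‖q‖ < 1) (a b : ℤ) :
    Summable fun n : ℤ => (-1 : ℂ) ^ n * q ^ (n ^ 2 + a * n) / (1 + q ^ (b * n)) := by
  refine .of_norm_bounded ((summable_zpow_sq_add (norm_pos_iff.2 hq0) hq1 a).mul_left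
    (1 - ‖q‖)⁻¹) fun n => ?_
  rw [norm_div, norm_mul, norm_zpow, norm_zpow, norm_neg, norm_one, one_zpow, one_mul,
    div_eq_inv_mul]
  gcongr
  exact one_sub_norm_le_norm_one_add_zpow hq0 hq1 _

section GoldenRatio

variable {K : Type*} [Field K]

theorem one_add_pow_five_eq_mul {φ : K} (hφ : φ ^ 2 = φ + 1) (x : K) :
    1 + x ^ 5 = (1 + x) * (1 - φ * x + x ^ 2) * (1 + (φ - 1) * x + x ^ 2) := by
  linear_combination (1 + x) * x ^ 2 * hφ

theorem golden_identity {φ x : K} (hφ : φ ^ 2 = φ + 1) (hx : x ≠ 0) (h5 : 1 + x ^ 5 ≠ 0) :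
    (1 + (φ - 1) * (x - 1)) / (1 + x ^ 5) + x⁻¹ ^ 2 * (1 + (φ - 1) * (x⁻¹ - 1)) / (1 + x⁻¹ ^ 5)
      = (2 - φ) / (1 - φ * x + x ^ 2) := by
  have hfac := one_add_pow_five_eq_mul hφ x
  have h5' : x ^ 5 + 1 ≠ 0 := by rwa [add_comm]
  have hD : 1 - φ * x + x ^ 2 ≠ 0 := fun h => h5 (by rw [hfac, h]; ring)
  field_simp
  linear_combination (1 + x ^ 5) * (1 + x) * x * (1 - x) ^ 2 * hφ

theorem cyclotomic_ten_identity {z x : K} (hz : z ^ 4 - z ^ 3 + z ^ 2 - z + 1 = 0) (hx : x ≠ 0)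
    (h5 : 1 + x ^ 5 ≠ 0) :
    (1 + (z ^ 2 - z ^ 3) * (x - 1)) / (1 + x ^ 5)
        + x⁻¹ ^ 2 * (1 + (z ^ 2 - z ^ 3) * (x⁻¹ - 1)) / (1 + x⁻¹ ^ 5)
      = (1 - z) * (1 - z⁻¹) / ((1 - z * x) * (1 - z⁻¹ * x)) := by
  have hz0 : z ≠ 0 := by rintro rfl; norm_num at hz
  -- `z + z⁻¹ = 2 cos (π / 5)` is the golden ratio
  have hφ : (z + z⁻¹) ^ 2 = (z + z⁻¹) + 1 := by
    field_simp
    linear_combination hz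
  have hc : z ^ 2 - z ^ 3 = (z + z⁻¹) - 1 := by
    field_simp
    linear_combination -hz
  have hnum : (1 - z) * (1 - z⁻¹) = 2 - (z + z⁻¹) := by
    field_simp
    ring
  have hden : (1 - z * x) * (1 - z⁻¹ * x) = 1 - (z + z⁻¹) * x + x ^ 2 := by
    field_simp
    ring
  rw [hc, hnum, hden]
  exact golden_identity hφ hx h5

theorem summand_pair_identity {z q : K} (hz : z ^ 4 - z ^ 3 + z ^ 2 - z + 1 = 0) (hq : q ≠ 0)
    (n : ℤ) (hD : 1 + q ^ (10 * n) ≠ 0) :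
    (2 * ((-1) ^ n * q ^ (n ^ 2 + 2 * n) / (1 + q ^ (10 * n)))
        + (z ^ 2 - z ^ 3) * (2 * ((-1) ^ n * q ^ (n ^ 2 + 2 * n) * (q ^ (2 * n) - 1)
          / (1 + q ^ (10 * n)))))
      + (2 * ((-1) ^ (-n) * q ^ ((-n) ^ 2 + 2 * -n) / (1 + q ^ (10 * -n)))
        + (z ^ 2 - z ^ 3) * (2 * ((-1) ^ (-n) * q ^ ((-n) ^ 2 + 2 * -n) * (q ^ (2 * -n) - 1)
          / (1 + q ^ (10 * -n)))))
      = 2 * ((1 - z) * (1 - z⁻¹) * (-1) ^ n * q ^ (n ^ 2 + 2 * n)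
          / ((1 - z * q ^ (2 * n)) * (1 - z⁻¹ * q ^ (2 * n)))) := by
  set x := q ^ (2 * n)
  have hx : x ≠ 0 := zpow_ne_zero _ hq
  have hsign : (-1 : K) ^ (-n) = (-1) ^ n := by
    rw [zpow_neg, ← inv_zpow, inv_neg, inv_one]
  have hneg : q ^ (2 * -n) = x⁻¹ := by rw [mul_neg, zpow_neg]
  have hsq : q ^ ((-n) ^ 2 + 2 * -n) = q ^ (n ^ 2 + 2 * n) * x⁻¹ ^ 2 := by
    rw [← hneg, ← zpow_natCast, ← zpow_mul, ← zpow_add₀ hq]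
    ring_nf
  have hfive : ∀ m : ℤ, q ^ (10 * m) = (q ^ (2 * m)) ^ 5 := fun m => by
    rw [← zpow_natCast, ← zpow_mul]
    ring_nf
  rw [hfive] at hD
  rw [hsign, hsq, hfive, hfive, hneg]
  linear_combination (2 * (-1) ^ n * q ^ (n ^ 2 + 2 * n)) * cyclotomic_ten_identity hz hx hD

end GoldenRatio

theorem zeta10_pow_five : zeta10 ^ 5 = -1 := by
  rw [zeta10, ← Complex.exp_nat_mul,
    show ((5 : ℕ) : ℂ) * (Real.pi * Complex.I / 5) = Real.pi * Complex.I by push_cast; ring]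
  exact Complex.exp_pi_mul_I

theorem zeta10_ne_neg_one : zeta10 ≠ -1 := by
  have him : zeta10.im = Real.sin (Real.pi / 5) := by
    rw [zeta10, show (Real.pi : ℂ) * Complex.I / 5 = ((Real.pi / 5 : ℝ) : ℂ) * Complex.I by
      push_cast; ring, Complex.exp_ofReal_mul_I_im]
  have hsin : 0 < Real.sin (Real.pi / 5) :=
    Real.sin_pos_of_pos_of_lt_pi (by positivity) (by linarith [Real.pi_pos])
  intro h
  rw [h, Complex.neg_im, Complex.one_im, neg_zero] at him
  linarith

theorem zeta10_cyclotomic : zeta10 ^ 4 - zeta10 ^ 3 + zeta10 ^ 2 - zeta10 + 1 = 0 := by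
  have h : (zeta10 + 1) * (zeta10 ^ 4 - zeta10 ^ 3 + zeta10 ^ 2 - zeta10 + 1) = 0 := by
    linear_combination zeta10_pow_five
  exact (mul_eq_zero.1 h).resolve_left fun h' => zeta10_ne_neg_one (eq_neg_of_add_eq_zero_left h')

theorem stmt_4 (q : ℂ) (hq0 : q ≠ 0) (hq1 : ‖q‖ < 1) :
    (∑' n : ℤ, (1 - zeta10) * (1 - zeta10⁻¹) * (-1 : ℂ) ^ n * q ^ (n ^ 2 + 2 * n) /
        ((1 - zeta10 * q ^ (2 * n)) * (1 - zeta10⁻¹ * q ^ (2 * n)))) =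
      2 * (∑' n : ℤ, (-1 : ℂ) ^ n * q ^ (n ^ 2 + 2 * n) / (1 + q ^ (10 * n)))
        + (zeta10 ^ 2 - zeta10 ^ 3) *
            (2 * ∑' n : ℤ,
              (-1 : ℂ) ^ n * q ^ (n ^ 2 + 2 * n) * (q ^ (2 * n) - 1) / (1 + q ^ (10 * n))) := by
  have hA := summable_neg_one_zpow_mul_zpow_sq_div hq0 hq1 2 10
  have hB : Summable fun n : ℤ =>
      (-1 : ℂ) ^ n * q ^ (n ^ 2 + 2 * n) * (q ^ (2 * n) - 1) / (1 + q ^ (10 * n)) :=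
    ((summable_neg_one_zpow_mul_zpow_sq_div hq0 hq1 4 10).sub hA).congr fun n => by
      rw [show n ^ 2 + 4 * n = (n ^ 2 + 2 * n) + 2 * n by ring, zpow_add₀ hq0]
      ring
  have hG := (hA.mul_left 2).add ((hB.mul_left 2).mul_left (zeta10 ^ 2 - zeta10 ^ 3))
  rw [← tsum_mul_left, ← tsum_mul_left, ← tsum_mul_left, ← (hA.mul_left 2).tsum_add
    ((hB.mul_left 2).mul_left _)]
  exact tsum_eq_tsum_of_add_neg_eq_two_mul hG fun n =>
    summand_pair_identity zeta10_cyclotomic hq0 n (one_add_zpow_ne_zero hq0 hq1 _)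
end

section
/- Let q be a complex number with 0 < |q| < 1. Then Σ_{n∈ℤ} (−1)^n q^{3n²+6n+1}/(1−q^{6n+2}) = (1−q³) · [ Σ_{n=0}^∞ (q^{12n²+12n+1}/(1−q^{12n+2})) · Σ_{m=0}^{4n+2} q^{3m} + Σ_{n=0}^∞ q^{12n²+36n+12}(1+q³)/((1−q^{12n+2})(1−q^{12n+8})) + Σ_{n=0}^∞ (q^{12n²+12n+2}/(1−q^{12n+4})) · Σ_{m=0}^{4n+2} q^{3m} + Σ_{n=0}^∞ q^{12n²+36n+15}(1+q³)/((1−q^{12n+4})(1−q^{12n+10})) ]. -/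
open scoped BigOperators

/-!
Split the bilateral sum into `n ≥ 0` and `n = -m - 1`; the second half becomes
`∑ (-1)ᵐ q^(3m²+6m+2) / (1 - q^(6m+4))`. Grouping each alternating series into the pairs of
terms `2k, 2k + 1`, every pair is `1 - q³` times the `k`-th terms of two of the four series on the
right, by the identity `c/(1-y) - cx/(1-yt²) = c(1-x)/(1-y) + cxy(1-t²)/((1-y)(1-yt²))` at
`t = q³`, `x = q^(12k+9)`, where `(1 - x)/(1 - t)` is the finite geometric sum.
-/

open Finset

namespace AppellLerch

section Generic

variable {𝕜 : Type*} [NormedField 𝕜]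

theorem one_sub_norm_le_norm_one_sub_pow {q : 𝕜} (hq : ‖q‖ ≤ 1) {D : ℕ} (hD : D ≠ 0) :
    1 - ‖q‖ ≤ ‖1 - q ^ D‖ := by
  have hpow : ‖q‖ ^ D ≤ ‖q‖ := pow_le_of_le_one (norm_nonneg q) hq hD
  have htri : ‖(1 : 𝕜)‖ - ‖q ^ D‖ ≤ ‖1 - q ^ D‖ := norm_sub_norm_le _ _
  rw [norm_one, norm_pow] at htri
  linarith

theorem one_sub_pow_ne_zero {q : 𝕜} (hq : ‖q‖ < 1) {D : ℕ} (hD : D ≠ 0) : 1 - q ^ D ≠ 0 :=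
  norm_pos_iff.mp ((sub_pos.2 hq).trans_le (one_sub_norm_le_norm_one_sub_pow hq.le hD))

theorem norm_geom_sum_le {x : 𝕜} (hx : ‖x‖ < 1) (n : ℕ) :
    ‖∑ i ∈ range n, x ^ i‖ ≤ (1 - ‖x‖)⁻¹ := by
  calc ‖∑ i ∈ range n, x ^ i‖ ≤ ∑ i ∈ range n, ‖x‖ ^ i := by
        simpa only [norm_pow] using norm_sum_le (range n) (x ^ ·)
    _ ≤ ‖x‖ ^ 0 / (1 - ‖x‖) := by
        rw [range_eq_Ico]
        exact geom_sum_Ico_le_of_lt_one (norm_nonneg x) hx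
    _ = (1 - ‖x‖)⁻¹ := by rw [pow_zero, one_div]

theorem summable_of_norm_le_mul_pow {E : Type*} [NormedAddCommGroup E] [CompleteSpace E]
    {r : ℝ} (hr0 : 0 ≤ r) (hr : r < 1) {e : ℕ → ℕ} (he : ∀ k, k ≤ e k) {C : ℝ} {f : ℕ → E}
    (hf : ∀ k, ‖f k‖ ≤ C * r ^ e k) : Summable f := by
  have hre : Summable fun k => r ^ e k :=
    (summable_geometric_of_lt_one hr0 hr).of_nonneg_of_le (fun k => pow_nonneg hr0 _)
      fun k => pow_le_pow_of_le_one hr0 hr.le (he k)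
  exact (hre.mul_left C).of_norm_bounded hf

theorem summable_pow_div_one_sub_pow_mul [CompleteSpace 𝕜] {q : 𝕜} (hq : ‖q‖ < 1)
    {E D : ℕ → ℕ} (hE : ∀ k, k ≤ E k) (hD : ∀ k, D k ≠ 0) {g : ℕ → 𝕜} {B : ℝ}
    (hg : ∀ k, ‖g k‖ ≤ B) : Summable fun k => q ^ E k / (1 - q ^ D k) * g k := by
  refine summable_of_norm_le_mul_pow (norm_nonneg q) hq hE (C := B / (1 - ‖q‖)) fun k => ?_
  rw [norm_mul, norm_div, norm_pow]
  calc ‖q‖ ^ E k / ‖1 - q ^ D k‖ * ‖g k‖ ≤ ‖q‖ ^ E k / (1 - ‖q‖) * B := by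
        gcongr
        · exact one_sub_norm_le_norm_one_sub_pow hq.le (hD k)
        · exact hg k
    _ = B / (1 - ‖q‖) * ‖q‖ ^ E k := by ring

end Generic

theorem tsum_neg_one_pow_mul_eq_tsum_sub {R : Type*} [NormedRing R] [CompleteSpace R]
    {a : ℕ → R} (ha : Summable a) :
    ∑' n, (-1) ^ n * a n = ∑' k, (a (2 * k) - a (2 * k + 1)) := by
  have he : HasSum (fun k => a (2 * k)) _ :=
    (ha.comp_injective (mul_right_injective₀ (two_ne_zero' ℕ))).hasSum
  have ho : HasSum (fun k => a (2 * k + 1)) _ :=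
    (ha.comp_injective ((add_left_injective 1).comp (mul_right_injective₀ (two_ne_zero' ℕ)))).hasSum
  have hsum := HasSum.even_add_odd (f := fun n => (-1) ^ n * a n)
    (by simpa [pow_mul] using he) (by simpa [pow_succ, pow_mul] using ho.neg)
  rw [← sub_eq_add_neg] at hsum
  exact hsum.tsum_eq.trans (he.sub ho).tsum_eq.symm

theorem mul_pair_identity {K : Type*} [Field K] {t x y c S : K} (hS : (1 - t) * S = 1 - x)
    (hy : 1 - y ≠ 0) (hyt : 1 - y * t ^ 2 ≠ 0) :
    (1 - t) * (c / (1 - y) * S + c * x * y * (1 + t) / ((1 - y) * (1 - y * t ^ 2))) =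
      c / (1 - y) - c * x / (1 - y * t ^ 2) := by
  rw [div_mul_eq_mul_div, div_add_div _ _ hy (mul_ne_zero hy hyt), div_sub_div _ _ hy hyt,
    mul_div_assoc', div_eq_div_iff (mul_ne_zero hy (mul_ne_zero hy hyt)) (mul_ne_zero hy hyt)]
  linear_combination (c * (1 - y) * (1 - y) * (1 - y * t ^ 2) ^ 2) * hS

/-- The bilateral summand of the theorem is `(-1)ⁿ lerchTerm q 0 n` at `n ≥ 0` and
`(-1)ⁿ lerchTerm q 1 n` at `-n - 1`. -/
noncomputable def lerchTerm (q : ℂ) (s n : ℕ) : ℂ :=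
  q ^ (3 * n ^ 2 + 6 * n + 1 + s) / (1 - q ^ (6 * n + 2 + 2 * s))

variable {q : ℂ}

theorem summable_lerchTerm (hq : ‖q‖ < 1) (s : ℕ) : Summable (lerchTerm q s) := by
  refine (summable_pow_div_one_sub_pow_mul hq (E := fun n => 3 * n ^ 2 + 6 * n + 1 + s)
    (D := fun n => 6 * n + 2 + 2 * s) (g := fun _ => 1) (fun n => by nlinarith) (fun n => by omega)
    fun _ => norm_one.le).congr fun n => mul_one _

theorem summable_neg_one_pow_mul_lerchTerm (hq : ‖q‖ < 1) (s : ℕ) :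
    Summable fun n => (-1) ^ n * lerchTerm q s n :=
  (summable_lerchTerm hq s).norm.of_norm_bounded fun n => by simp

theorem bilateral_summand_natCast (n : ℕ) :
    (-1 : ℂ) ^ (n : ℤ) * q ^ (3 * (n : ℤ) ^ 2 + 6 * n + 1) / (1 - q ^ (6 * (n : ℤ) + 2)) =
      (-1) ^ n * lerchTerm q 0 n := by
  rw [lerchTerm, mul_div_assoc, zpow_natCast]
  norm_cast

theorem bilateral_summand_neg_succ (hq0 : q ≠ 0) (hq : ‖q‖ < 1) (n : ℕ) :
    (-1 : ℂ) ^ (-((n : ℤ) + 1)) * q ^ (3 * (-((n : ℤ) + 1)) ^ 2 + 6 * (-((n : ℤ) + 1)) + 1) /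
        (1 - q ^ (6 * (-((n : ℤ) + 1)) + 2)) =
      (-1) ^ n * lerchTerm q 1 n := by
  have hsign : (-1 : ℂ) ^ (-((n : ℤ) + 1)) = -(-1) ^ n := by
    rw [zpow_neg, ← Int.natCast_succ, zpow_natCast, ← inv_pow, inv_neg, inv_one, pow_succ]
    ring
  have hnum : 3 * (-((n : ℤ) + 1)) ^ 2 + 6 * (-((n : ℤ) + 1)) + 1 =
      ((3 * n ^ 2 + 6 * n + 1 + 1 : ℕ) : ℤ) - ((6 * n + 2 + 2 * 1 : ℕ) : ℤ) := by
    push_cast; ring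
  have hden : 6 * (-((n : ℤ) + 1)) + 2 = -((6 * n + 2 + 2 * 1 : ℕ) : ℤ) := by
    push_cast; ring
  rw [hsign, hnum, hden, zpow_sub₀ hq0, zpow_neg, zpow_natCast, zpow_natCast, lerchTerm]
  have hw1 : (1 : ℂ) - q ^ (6 * n + 2 + 2 * 1) ≠ 0 := one_sub_pow_ne_zero hq (by omega)
  have hw0 : q ^ (6 * n + 2 + 2 * 1) ≠ 0 := pow_ne_zero _ hq0
  generalize q ^ (6 * n + 2 + 2 * 1) = w at hw0 hw1 ⊢
  have hw1' : w - 1 ≠ 0 := by rwa [← neg_ne_zero, neg_sub]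
  field_simp
  ring

theorem tsum_bilateral_eq (hq0 : q ≠ 0) (hq : ‖q‖ < 1) :
    ∑' n : ℤ, (-1 : ℂ) ^ n * q ^ (3 * n ^ 2 + 6 * n + 1) / (1 - q ^ (6 * n + 2)) =
      ∑' k, (lerchTerm q 0 (2 * k) - lerchTerm q 0 (2 * k + 1)) +
        ∑' k, (lerchTerm q 1 (2 * k) - lerchTerm q 1 (2 * k + 1)) := by
  simp_rw [← tsum_neg_one_pow_mul_eq_tsum_sub (summable_lerchTerm hq _),
    ← bilateral_summand_natCast, ← bilateral_summand_neg_succ hq0 hq]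
  refine tsum_of_nat_of_neg_add_one ?_ ?_
  · simpa only [bilateral_summand_natCast] using summable_neg_one_pow_mul_lerchTerm hq 0
  · simpa only [bilateral_summand_neg_succ hq0 hq] using summable_neg_one_pow_mul_lerchTerm hq 1

theorem one_sub_pow_three_mul_pair (hq : ‖q‖ < 1) (s k : ℕ) :
    (1 - q ^ 3) * (q ^ (12 * k ^ 2 + 12 * k + 1 + s) / (1 - q ^ (12 * k + 2 + 2 * s)) *
          ∑ m ∈ range (4 * k + 3), q ^ (3 * m) +
        q ^ (12 * k ^ 2 + 36 * k + 12 + 3 * s) * (1 + q ^ 3) /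
          ((1 - q ^ (12 * k + 2 + 2 * s)) * (1 - q ^ (12 * k + 8 + 2 * s)))) =
      lerchTerm q s (2 * k) - lerchTerm q s (2 * k + 1) := by
  have hS : (1 - q ^ 3) * ∑ m ∈ range (4 * k + 3), q ^ (3 * m) = 1 - q ^ (12 * k + 9) := by
    simp_rw [pow_mul]
    rw [mul_neg_geom_sum]
    ring
  have hyt : 1 - q ^ (12 * k + 2 + 2 * s) * (q ^ 3) ^ 2 ≠ 0 := by
    rw [← pow_mul, ← pow_add]
    exact one_sub_pow_ne_zero hq (by omega)
  have := mul_pair_identity (c := q ^ (12 * k ^ 2 + 12 * k + 1 + s)) hS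
    (one_sub_pow_ne_zero hq (by omega)) hyt
  rw [lerchTerm, lerchTerm]
  convert this using 3 <;> ring

theorem one_sub_pow_three_mul_tsum_pair (hq : ‖q‖ < 1) (s : ℕ) :
    (1 - q ^ 3) * ((∑' k : ℕ, q ^ (12 * k ^ 2 + 12 * k + 1 + s) / (1 - q ^ (12 * k + 2 + 2 * s)) *
          ∑ m ∈ range (4 * k + 3), q ^ (3 * m)) +
        ∑' k : ℕ, q ^ (12 * k ^ 2 + 36 * k + 12 + 3 * s) * (1 + q ^ 3) /
          ((1 - q ^ (12 * k + 2 + 2 * s)) * (1 - q ^ (12 * k + 8 + 2 * s)))) =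
      ∑' k, (lerchTerm q s (2 * k) - lerchTerm q s (2 * k + 1)) := by
  have hq3 : ‖q ^ 3‖ < 1 := by
    rw [norm_pow]
    exact pow_lt_one₀ (norm_nonneg q) hq three_ne_zero
  have hT1 : Summable fun k : ℕ => q ^ (12 * k ^ 2 + 12 * k + 1 + s) /
      (1 - q ^ (12 * k + 2 + 2 * s)) * ∑ m ∈ range (4 * k + 3), q ^ (3 * m) :=
    summable_pow_div_one_sub_pow_mul hq (fun k => by nlinarith) (fun k => by omega)
      fun k => by simpa only [pow_mul] using norm_geom_sum_le hq3 (4 * k + 3)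
  have hnum : ‖1 + q ^ 3‖ ≤ 2 :=
    (norm_add_le 1 (q ^ 3)).trans (by rw [norm_one]; linarith)
  have hT2 : Summable fun k : ℕ => q ^ (12 * k ^ 2 + 36 * k + 12 + 3 * s) * (1 + q ^ 3) /
      ((1 - q ^ (12 * k + 2 + 2 * s)) * (1 - q ^ (12 * k + 8 + 2 * s))) := by
    simp_rw [mul_div_mul_comm]
    refine summable_pow_div_one_sub_pow_mul hq (B := 2 / (1 - ‖q‖)) (fun k => by nlinarith)
      (fun k => by omega) fun k => ?_
    rw [norm_div]
    exact div_le_div₀ zero_le_two hnum (sub_pos.2 hq)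
      (one_sub_norm_le_norm_one_sub_pow hq.le (by omega))
  rw [← hT1.tsum_add hT2, ← tsum_mul_left]
  exact tsum_congr (one_sub_pow_three_mul_pair hq s)

end AppellLerch

open AppellLerch in
theorem stmt_12 (q : ℂ) (hq0 : q ≠ 0) (hq1 : ‖q‖ < 1) :
    (∑' n : ℤ, (-1 : ℂ) ^ n * q ^ (3 * n ^ 2 + 6 * n + 1) / (1 - q ^ (6 * n + 2))) =
      (1 - q ^ 3) *
        ((∑' n : ℕ, q ^ (12 * n ^ 2 + 12 * n + 1) / (1 - q ^ (12 * n + 2)) *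
            ∑ m ∈ Finset.range (4 * n + 3), q ^ (3 * m))
          + (∑' n : ℕ, q ^ (12 * n ^ 2 + 36 * n + 12) * (1 + q ^ 3) /
              ((1 - q ^ (12 * n + 2)) * (1 - q ^ (12 * n + 8))))
          + (∑' n : ℕ, q ^ (12 * n ^ 2 + 12 * n + 2) / (1 - q ^ (12 * n + 4)) *
              ∑ m ∈ Finset.range (4 * n + 3), q ^ (3 * m))
          + ∑' n : ℕ, q ^ (12 * n ^ 2 + 36 * n + 15) * (1 + q ^ 3) /
              ((1 - q ^ (12 * n + 4)) * (1 - q ^ (12 * n + 10)))) := by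
  rw [tsum_bilateral_eq hq0 hq1, ← one_sub_pow_three_mul_tsum_pair hq1 0,
    ← one_sub_pow_three_mul_tsum_pair hq1 1]
  -- normalizes the exponents at `s = 0, 1` to the ones of the statement
  ring_nf
end

section
/- There exists a sequence (a_n)_{n≥0} of nonnegative real numbers such that for every real q with 0 < q < 1, ((−q³;q³)_∞/(q³;q³)_∞) · Σ_{n∈ℤ} (−1)^n q^{3n²+6n+1}/(1−q^{6n+2}) = Σ_{n=0}^∞ a_n q^n; i.e., this function has nonnegative Maclaurin coefficients. -/
open scoped BigOperators

/-- The infinite q-Pochhammer symbol `(x; q)_∞ = ∏_{n=0}^∞ (1 - x qⁿ)` (real version). -/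
noncomputable def pochR (x q : ℝ) : ℝ := ∏' n : ℕ, (1 - x * q ^ n)

/-- `J_m = (q^m; q^m)_∞`. -/
noncomputable def JR (m : ℕ) (q : ℝ) : ℝ := pochR (q ^ m) (q ^ m)

/-- `J_{a,m} = (q^a; q^m)_∞ (q^{m-a}; q^m)_∞ (q^m; q^m)_∞`. -/
noncomputable def JamR (a m : ℕ) (q : ℝ) : ℝ :=
  pochR (q ^ a) (q ^ m) * pochR (q ^ (m - a)) (q ^ m) * pochR (q ^ m) (q ^ m)

/-!
Splitting the bilateral sum into `n ≥ 0` and `n < 0`, and then by the parity of `n`, the Lambert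
series becomes `L₀ - L₁` with `L_r = ∑_k (Y_{2k+r} + Z_{2k+r})`, where each `Y_n`, `Z_n` is a
geometric series `q^E / (1 - q^D) = ∑_j q^{E + D j}`. The prefactor is the overpartition generating
function `∑_c p̄(c) q^{3c}`, and `p̄` is nondecreasing. Each geometric term of `L₁` is the
corresponding term of `L₀` times `q^{3(4k+3+2j)}`, and multiplying `∑_c p̄(c) q^{3c}` by a power
of `q³` can only lower its coefficients. So coefficientwise the prefactor times `L₁` is dominated
by the prefactor times `L₀`. All coefficients are manipulated in `ℝ≥0∞`, where rearranging
series needs no summability side conditions.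
-/

open Filter Function Finset
open scoped ENNReal Topology

namespace ENNReal

lemma tsum_mul_tsum {α β : Type*} (f : α → ℝ≥0∞) (g : β → ℝ≥0∞) :
    (∑' a, f a) * ∑' b, g b = ∑' p : α × β, f p.1 * g p.2 := by
  rw [ENNReal.tsum_prod', ← ENNReal.tsum_mul_right]
  exact tsum_congr fun a => ENNReal.tsum_mul_left.symm

lemma iSup_tsum_of_monotone {f : ℕ → ℕ → ℝ≥0∞} (hf : Monotone f) :
    ⨆ N, ∑' c, f N c = ∑' c, ⨆ N, f N c := by
  simp_rw [← MeasureTheory.lintegral_count]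
  exact (MeasureTheory.lintegral_iSup (fun N => measurable_of_countable _) hf).symm

lemma tsum_mul_tsum_pow_mul_succ (g : ℕ → ℝ≥0∞) (R : ℝ≥0∞) {M : ℕ} (hM : 0 < M) :
    (∑' c, g c * R ^ c) * ∑' j, R ^ (M * (j + 1)) =
      ∑' n, (∑ j ∈ range n, if M * (j + 1) ≤ n then g (n - M * (j + 1)) else 0) * R ^ n := by
  set G : ℕ × ℕ → ℝ≥0∞ := fun p =>
    if M * (p.2 + 1) ≤ p.1 then g (p.1 - M * (p.2 + 1)) * R ^ p.1 else 0
  set φ : ℕ × ℕ → ℕ × ℕ := fun p => (p.1 + M * (p.2 + 1), p.2)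
  have hφ : Injective φ := fun p p' h => by
    obtain ⟨h1, h2⟩ := Prod.mk.inj h
    rw [h2] at h1
    exact Prod.ext (by omega) h2
  have hsupp : support G ⊆ Set.range φ := fun p hp => by
    by_cases h : M * (p.2 + 1) ≤ p.1
    · exact ⟨(p.1 - M * (p.2 + 1), p.2), Prod.ext (by simp [φ]; omega) rfl⟩
    · exact absurd (if_neg h) hp
  calc (∑' c, g c * R ^ c) * ∑' j, R ^ (M * (j + 1))
      = ∑' p : ℕ × ℕ, G (φ p) := by
        rw [tsum_mul_tsum]
        refine tsum_congr fun p => ?_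
        simp only [G, φ, if_pos (Nat.le_add_left _ _), Nat.add_sub_cancel, pow_add, mul_assoc]
    _ = ∑' n, ∑' j, G (n, j) := by rw [hφ.tsum_eq hsupp, ENNReal.tsum_prod']
    _ = _ := by
        refine tsum_congr fun n => ?_
        rw [tsum_eq_sum (s := range n), sum_mul]
        · exact sum_congr rfl fun j _ => by simp only [G]; split_ifs <;> simp
        · intro j hj
          have : ¬M * (j + 1) ≤ n := by simp only [mem_range, not_lt] at hj; nlinarith
          simp only [G, if_neg this]

lemma hasSum_toReal_mul_pow {A q : ℝ} (hA : 0 ≤ A) (hq : 0 ≤ q) {u : ℕ → ℝ≥0∞}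
    (hu : ENNReal.ofReal A = ∑' n, u n * ENNReal.ofReal q ^ n) :
    HasSum (fun n => (u n).toReal * q ^ n) A := by
  have hfin : ∑' n, u n * ENNReal.ofReal q ^ n ≠ ⊤ := hu ▸ ENNReal.ofReal_ne_top
  have := ENNReal.hasSum_toReal hfin
  rw [← ENNReal.tsum_toReal_eq (ENNReal.ne_top_of_tsum_ne_top hfin), ← hu,
    ENNReal.toReal_ofReal hA] at this
  simpa [ENNReal.toReal_mul, ENNReal.toReal_pow, ENNReal.toReal_ofReal hq] using this

lemma hasSum_toReal_tsub_mul_pow {A B q : ℝ} (hA : 0 ≤ A) (hB : 0 ≤ B) (hq : 0 < q)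
    {u v : ℕ → ℝ≥0∞} (hvu : v ≤ u)
    (hu : ENNReal.ofReal A = ∑' n, u n * ENNReal.ofReal q ^ n)
    (hv : ENNReal.ofReal B = ∑' n, v n * ENNReal.ofReal q ^ n) :
    HasSum (fun n => (u n - v n).toReal * q ^ n) (A - B) := by
  refine ((hasSum_toReal_mul_pow hA hq.le hu).sub (hasSum_toReal_mul_pow hB hq.le hv)).congr_fun
    fun n => ?_
  have hfin : u n * ENNReal.ofReal q ^ n ≠ ⊤ :=
    ne_top_of_le_ne_top (hu ▸ ENNReal.ofReal_ne_top) (ENNReal.le_tsum n)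
  have hun : u n ≠ ⊤ :=
    (ENNReal.lt_top_of_mul_ne_top_left hfin (pow_ne_zero _ (ENNReal.ofReal_pos.2 hq).ne')).ne
  simp only [ENNReal.toReal_sub_of_le (hvu n) hun, sub_mul]

lemma ofReal_one_add_div_one_sub {y : ℝ} (h0 : 0 ≤ y) (h1 : y < 1) :
    ENNReal.ofReal ((1 + y) / (1 - y)) = 1 + 2 * ∑' j, ENNReal.ofReal y ^ (j + 1) := by
  have hs : Summable fun j => y ^ (j + 1) :=
    (summable_nat_add_iff 1).2 (summable_geometric_of_lt_one h0 h1)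
  have hgeom : ∑' j, y ^ (j + 1) = y / (1 - y) := by
    simp_rw [pow_succ', tsum_mul_left, tsum_geometric_of_lt_one h0 h1, div_eq_mul_inv]
  have hreal : (1 + y) / (1 - y) = 1 + 2 * ∑' j, y ^ (j + 1) := by
    rw [hgeom]
    field_simp [(sub_pos.2 h1).ne']
    ring
  rw [hreal, ENNReal.ofReal_add zero_le_one (by positivity), ENNReal.ofReal_mul zero_le_two,
    ENNReal.ofReal_tsum_of_nonneg (fun j => by positivity) hs]
  simp [ENNReal.ofReal_pow h0]

lemma ofReal_pow_div_one_sub_pow {q : ℝ} (h0 : 0 ≤ q) (h1 : q < 1) (E : ℕ) {D : ℕ}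
    (hD : D ≠ 0) :
    ENNReal.ofReal (q ^ E / (1 - q ^ D)) = ∑' j, ENNReal.ofReal q ^ (E + D * j) := by
  have hqD : q ^ D < 1 := pow_lt_one₀ h0 h1 hD
  have hs : Summable fun j => q ^ (E + D * j) := by
    simpa only [pow_add, pow_mul] using
      (summable_geometric_of_lt_one (pow_nonneg h0 D) hqD).mul_left (q ^ E)
  have hreal : q ^ E / (1 - q ^ D) = ∑' j, q ^ (E + D * j) := by
    simp_rw [pow_add, pow_mul, tsum_mul_left, tsum_geometric_of_lt_one (pow_nonneg h0 D) hqD,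
      div_eq_mul_inv]
  rw [hreal, ENNReal.ofReal_tsum_of_nonneg (fun j => pow_nonneg h0 _) hs]
  simp_rw [ENNReal.ofReal_pow h0]

end ENNReal

lemma one_le_one_add_div_one_sub {y : ℝ} (h0 : 0 ≤ y) (h1 : y < 1) : 1 ≤ (1 + y) / (1 - y) :=
  (one_le_div (by linarith)).2 (by linarith)

section PowDivOneSubPow

variable {q : ℝ}

lemma pow_div_one_sub_pow_nonneg (h0 : 0 ≤ q) (h1 : q < 1) (E D : ℕ) :
    0 ≤ q ^ E / (1 - q ^ D) :=
  div_nonneg (pow_nonneg h0 E) (sub_nonneg.2 (pow_le_one₀ h0 h1.le))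

lemma summable_pow_div_one_sub_pow (h0 : 0 ≤ q) (h1 : q < 1) {E D : ℕ → ℕ}
    (hE : ∀ n, n ≤ E n) (hD : ∀ n, D n ≠ 0) :
    Summable fun n => q ^ E n / (1 - q ^ D n) := by
  refine Summable.of_nonneg_of_le (fun n => pow_div_one_sub_pow_nonneg h0 h1 _ _) (fun n => ?_)
    ((summable_geometric_of_lt_one h0 h1).div_const (1 - q))
  exact div_le_div₀ (pow_nonneg h0 n) (pow_le_pow_of_le_one h0 h1.le (hE n)) (by linarith)
    (by linarith [pow_le_of_le_one h0 h1.le (hD n)])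

lemma zpow_sub_div_one_sub_zpow_neg (hq : q ≠ 0) (a c : ℤ) :
    q ^ (a - c) / (1 - q ^ (-c)) = -(q ^ a / (1 - q ^ c)) := by
  have hc : q ^ c ≠ 0 := zpow_ne_zero c hq
  rw [zpow_sub₀ hq, zpow_neg, div_div, mul_sub, mul_one, mul_inv_cancel₀ hc, ← neg_sub,
    div_neg]

end PowDivOneSubPow

lemma tsum_neg_one_pow_mul {f : ℕ → ℝ} (hf : Summable f) :
    ∑' n, (-1) ^ n * f n = ∑' k, f (2 * k) - ∑' k, f (2 * k + 1) := by
  have he : Summable fun k => f (2 * k) := hf.comp_injective (mul_right_injective₀ two_ne_zero)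
  have ho : Summable fun k => f (2 * k + 1) :=
    hf.comp_injective ((add_left_injective 1).comp (mul_right_injective₀ two_ne_zero))
  rw [← tsum_even_add_odd (f := fun n => (-1) ^ n * f n) (by simpa [pow_mul] using he)
    (by simpa [pow_succ, pow_mul] using ho.neg), sub_eq_add_neg, ← tsum_neg]
  simp [pow_succ, pow_mul]

noncomputable def fiberSum {ι : Type*} (g : ι → ℝ≥0∞) (w : ι → ℕ) (n : ℕ) : ℝ≥0∞ :=
  ∑' x : {x // w x = n}, g x

lemma tsum_mul_pow_eq_tsum_fiberSum {ι : Type*} (g : ι → ℝ≥0∞) (w : ι → ℕ) (R : ℝ≥0∞) :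
    ∑' x, g x * R ^ w x = ∑' n, fiberSum g w n * R ^ n := by
  rw [← (Equiv.sigmaFiberEquiv w).tsum_eq, ENNReal.tsum_sigma']
  refine tsum_congr fun n => ?_
  rw [fiberSum, ← ENNReal.tsum_mul_right]
  exact tsum_congr fun x => by simp [Equiv.sigmaFiberEquiv, x.2]

lemma fiberSum_le_of_injective {ι κ : Type*} {g : ι → ℝ≥0∞} {h : κ → ℝ≥0∞}
    {w : ι → ℕ} {v : κ → ℕ} (Φ : ι → κ) (hΦ : Injective Φ) (hw : ∀ x, v (Φ x) = w x)
    (hg : ∀ x, g x ≤ h (Φ x)) (n : ℕ) : fiberSum g w n ≤ fiberSum h v n := by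
  let Ψ : {x // w x = n} → {y // v y = n} := fun x => ⟨Φ x, (hw x).trans x.2⟩
  have hΨ : Injective Ψ := fun x x' hxx' => Subtype.ext (hΦ (congrArg Subtype.val hxx'))
  calc fiberSum g w n ≤ ∑' x, h (Ψ x) := ENNReal.tsum_le_tsum fun x => hg x
    _ ≤ fiberSum h v n := ENNReal.tsum_comp_le_tsum_of_injective hΨ _

namespace OverpartitionLambert

/-- `overpartCountLE N c` is the coefficient of `x ^ c` in `∏_{m=1}^{N} (1 + x^m) / (1 - x^m)`,
i.e. the number of overpartitions of `c` into parts at most `N`; the recursion multiplies by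
`(1 + x^M) / (1 - x^M) = 1 + 2 ∑_{j ≥ 0} x^{M (j+1)}`. -/
def overpartCountLE : ℕ → ℕ → ℕ
  | 0, c => if c = 0 then 1 else 0
  | N + 1, c => overpartCountLE N c + 2 * ∑ j ∈ range c,
      if (N + 1) * (j + 1) ≤ c then overpartCountLE N (c - (N + 1) * (j + 1)) else 0

def overpartCount (c : ℕ) : ℕ := overpartCountLE c c

lemma overpartCountLE_succ (N c : ℕ) : overpartCountLE (N + 1) c = overpartCountLE N c +
    2 * ∑ j ∈ range c,
      if (N + 1) * (j + 1) ≤ c then overpartCountLE N (c - (N + 1) * (j + 1)) else 0 := rfl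

lemma overpartCountLE_succ_of_le {N c : ℕ} (h : c ≤ N) :
    overpartCountLE (N + 1) c = overpartCountLE N c := by
  rw [overpartCountLE_succ, sum_eq_zero fun j _ => if_neg ?_, mul_zero, add_zero]
  nlinarith

lemma overpartCountLE_of_le {N c : ℕ} (h : c ≤ N) : overpartCountLE N c = overpartCount c := by
  induction N, h using Nat.le_induction with
  | base => rfl
  | succ N hcN ih => rw [overpartCountLE_succ_of_le hcN, ih]

lemma overpartCountLE_mono_left (c : ℕ) : Monotone fun N => overpartCountLE N c :=
  monotone_nat_of_le_succ fun N => by rw [overpartCountLE_succ]; exact Nat.le_add_right _ _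

lemma overpartCountLE_le_overpartCount (N c : ℕ) : overpartCountLE N c ≤ overpartCount c := by
  rcases le_total N c with h | h
  · exact (overpartCountLE_mono_left c h).trans_eq (overpartCountLE_of_le le_rfl)
  · exact (overpartCountLE_of_le h).le

lemma overpartCountLE_one (c : ℕ) : overpartCountLE 1 c = if c = 0 then 1 else 2 := by
  rcases c with _ | c
  · rfl
  · rw [overpartCountLE_succ, sum_eq_single c]
    · simp [overpartCountLE]
    · intro j hj hjc
      rw [mem_range] at hj
      simp [overpartCountLE]
      omega
    · simp

lemma overpartCountLE_mono_right {N : ℕ} (hN : 1 ≤ N) : Monotone (overpartCountLE N) := by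
  induction N, hN using Nat.le_induction with
  | base =>
    refine monotone_nat_of_le_succ fun c => ?_
    simp only [overpartCountLE_one]
    split_ifs <;> simp_all
  | succ N _ ih =>
    refine monotone_nat_of_le_succ fun c => ?_
    rw [overpartCountLE_succ, overpartCountLE_succ]
    gcongr ?_ + 2 * ?_
    · exact ih c.le_succ
    · refine (sum_le_sum fun j _ => ?_).trans
        (sum_le_sum_of_subset (range_subset_range.2 c.le_succ))
      split_ifs with h h'
      · exact ih (by omega)
      · omega
      · exact Nat.zero_le _
      · exact le_rfl

lemma overpartCount_mono : Monotone overpartCount := by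
  intro c c' h
  rcases h.eq_or_lt with rfl | h
  · exact le_rfl
  · calc overpartCount c = overpartCountLE c' c := (overpartCountLE_of_le h.le).symm
      _ ≤ overpartCountLE c' c' := overpartCountLE_mono_right (by omega) h.le

section GenFun

variable {x : ℝ}

noncomputable def partialGenFun (x : ℝ) (N : ℕ) : ℝ :=
  ∏ m ∈ range N, (1 + x ^ (m + 1)) / (1 - x ^ (m + 1))

lemma one_le_partialGenFun (h0 : 0 ≤ x) (h1 : x < 1) (N : ℕ) : 1 ≤ partialGenFun x N :=
  one_le_prod fun m _ =>
    one_le_one_add_div_one_sub (by positivity) (pow_lt_one₀ h0 h1 m.succ_ne_zero)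

lemma monotone_partialGenFun (h0 : 0 ≤ x) (h1 : x < 1) : Monotone (partialGenFun x) :=
  monotone_nat_of_le_succ fun N => by
    rw [partialGenFun, partialGenFun, prod_range_succ]
    exact le_mul_of_one_le_right (zero_le_one.trans (one_le_partialGenFun h0 h1 N))
      (one_le_one_add_div_one_sub (by positivity) (pow_lt_one₀ h0 h1 N.succ_ne_zero))

lemma ofReal_partialGenFun (h0 : 0 ≤ x) (h1 : x < 1) (N : ℕ) :
    ENNReal.ofReal (partialGenFun x N) =
      ∑' c, (overpartCountLE N c : ℝ≥0∞) * ENNReal.ofReal x ^ c := by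
  induction N with
  | zero =>
    rw [partialGenFun, prod_range_zero, ENNReal.ofReal_one, tsum_eq_single 0]
    · simp [overpartCountLE]
    · intro c hc
      simp [overpartCountLE, hc]
  | succ N ih =>
    rw [partialGenFun, prod_range_succ, ← partialGenFun,
      ENNReal.ofReal_mul (zero_le_one.trans (one_le_partialGenFun h0 h1 N)), ih,
      ENNReal.ofReal_one_add_div_one_sub (by positivity) (pow_lt_one₀ h0 h1 N.succ_ne_zero)]
    have hpow (j : ℕ) :
        ENNReal.ofReal (x ^ (N + 1)) ^ (j + 1) = ENNReal.ofReal x ^ ((N + 1) * (j + 1)) := by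
      rw [ENNReal.ofReal_pow h0, ← pow_mul]
    simp_rw [hpow]
    rw [mul_add, mul_one, mul_left_comm, ENNReal.tsum_mul_tsum_pow_mul_succ _ _ N.succ_pos,
      ← ENNReal.tsum_mul_left, ← ENNReal.tsum_add]
    refine tsum_congr fun c => ?_
    rw [overpartCountLE_succ]
    push_cast
    ring

lemma tendsto_partialGenFun (h0 : 0 ≤ x) (h1 : x < 1) :
    Tendsto (partialGenFun x) atTop (𝓝 (pochR (-x) x / pochR x x)) := by
  have hs : Summable fun n => x ^ (n + 1) :=
    (summable_nat_add_iff 1).2 (summable_geometric_of_lt_one h0 h1)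
  have hnum : pochR (-x) x = ∏' n, (1 + x ^ (n + 1)) :=
    tprod_congr fun n => by ring
  have hden : pochR x x = ∏' n, (1 + -x ^ (n + 1)) :=
    tprod_congr fun n => by ring
  have hden0 : ∏' n, (1 + -x ^ (n + 1)) ≠ 0 := tprod_one_add_ne_zero_of_summable
    (fun n => by linarith [pow_lt_one₀ h0 h1 (by omega : n + 1 ≠ 0)]) (by simpa using hs.abs)
  rw [hnum, hden]
  refine ((Real.multipliable_one_add_of_summable hs).hasProd.tendsto_prod_nat.div
    (Real.multipliable_one_add_of_summable hs.neg).hasProd.tendsto_prod_nat hden0).congr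
    fun N => ?_
  simp only [partialGenFun, Pi.div_apply, prod_div_distrib, sub_eq_add_neg]

lemma pochR_neg_div_pochR_nonneg (h0 : 0 ≤ x) (h1 : x < 1) : 0 ≤ pochR (-x) x / pochR x x :=
  ge_of_tendsto' (tendsto_partialGenFun h0 h1) fun N =>
    zero_le_one.trans (one_le_partialGenFun h0 h1 N)

lemma ofReal_pochR_neg_div_pochR (h0 : 0 ≤ x) (h1 : x < 1) :
    ENNReal.ofReal (pochR (-x) x / pochR x x) =
      ∑' c, (overpartCount c : ℝ≥0∞) * ENNReal.ofReal x ^ c := by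
  have hmono : Monotone fun N => ENNReal.ofReal (partialGenFun x N) :=
    fun _ _ h => ENNReal.ofReal_le_ofReal (monotone_partialGenFun h0 h1 h)
  rw [← iSup_eq_of_tendsto hmono
    ((ENNReal.continuous_ofReal.tendsto _).comp (tendsto_partialGenFun h0 h1))]
  simp_rw [ofReal_partialGenFun h0 h1]
  rw [ENNReal.iSup_tsum_of_monotone
    (f := fun N c => (overpartCountLE N c : ℝ≥0∞) * ENNReal.ofReal x ^ c) fun N N' h c =>
    mul_le_mul_left (Nat.cast_le.2 (overpartCountLE_mono_left c h)) _]
  refine tsum_congr fun c => ?_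
  rw [← ENNReal.iSup_mul]
  congr 1
  refine le_antisymm (iSup_le fun N => Nat.cast_le.2 (overpartCountLE_le_overpartCount N c)) ?_
  exact le_iSup_of_le c le_rfl

end GenFun

noncomputable def lambertY (q : ℝ) (n : ℕ) : ℝ :=
  q ^ (3 * n ^ 2 + 6 * n + 1) / (1 - q ^ (6 * n + 2))

/-- Up to the sign `(-1) ^ n`, the term of index `-(n + 1)` of the bilateral Lambert series. -/
noncomputable def lambertZ (q : ℝ) (n : ℕ) : ℝ :=
  q ^ (3 * n ^ 2 + 6 * n + 2) / (1 - q ^ (6 * n + 4))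

noncomputable def lambertHalf (q : ℝ) (r : ℕ) : ℝ :=
  ∑' k, (lambertY q (2 * k + r) + lambertZ q (2 * k + r))

section Lambert

variable {q : ℝ}

lemma summable_lambertY (h0 : 0 ≤ q) (h1 : q < 1) : Summable (lambertY q) :=
  summable_pow_div_one_sub_pow h0 h1 (fun n => by nlinarith) (fun n => by omega)

lemma summable_lambertZ (h0 : 0 ≤ q) (h1 : q < 1) : Summable (lambertZ q) :=
  summable_pow_div_one_sub_pow h0 h1 (fun n => by nlinarith) (fun n => by omega)

lemma lambertY_nonneg (h0 : 0 ≤ q) (h1 : q < 1) (n : ℕ) : 0 ≤ lambertY q n :=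
  pow_div_one_sub_pow_nonneg h0 h1 _ _

lemma lambertZ_nonneg (h0 : 0 ≤ q) (h1 : q < 1) (n : ℕ) : 0 ≤ lambertZ q n :=
  pow_div_one_sub_pow_nonneg h0 h1 _ _

lemma lambertHalf_nonneg (h0 : 0 ≤ q) (h1 : q < 1) (r : ℕ) : 0 ≤ lambertHalf q r :=
  tsum_nonneg fun _ => add_nonneg (lambertY_nonneg h0 h1 _) (lambertZ_nonneg h0 h1 _)

lemma lambert_term_natCast (q : ℝ) (n : ℕ) :
    (-1 : ℝ) ^ (n : ℤ) * q ^ (3 * (n : ℤ) ^ 2 + 6 * n + 1) / (1 - q ^ (6 * (n : ℤ) + 2)) =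
      (-1) ^ n * lambertY q n := by
  rw [mul_div_assoc, lambertY, zpow_natCast, ← zpow_natCast q, ← zpow_natCast q]
  push_cast
  rfl

lemma lambert_term_neg_succ (hq : q ≠ 0) (n : ℕ) :
    (-1 : ℝ) ^ (-((n : ℤ) + 1)) * q ^ (3 * (-((n : ℤ) + 1)) ^ 2 + 6 * -((n : ℤ) + 1) + 1) /
        (1 - q ^ (6 * -((n : ℤ) + 1) + 2)) = (-1) ^ n * lambertZ q n := by
  have hexp : 3 * (-((n : ℤ) + 1)) ^ 2 + 6 * -((n : ℤ) + 1) + 1 =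
      ((3 * n ^ 2 + 6 * n + 2 : ℕ) : ℤ) - ((6 * n + 4 : ℕ) : ℤ) := by push_cast; ring
  have hden : 6 * -((n : ℤ) + 1) + 2 = -((6 * n + 4 : ℕ) : ℤ) := by push_cast; ring
  have hsign : (-1 : ℝ) ^ (-((n : ℤ) + 1)) = -(-1) ^ n := by
    rw [zpow_neg, ← Nat.cast_succ, zpow_natCast, pow_succ, mul_inv, ← inv_pow]
    simp
  rw [hexp, hden, mul_div_assoc, zpow_sub_div_one_sub_zpow_neg hq, hsign, zpow_natCast,
    zpow_natCast, lambertZ]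
  ring

lemma tsum_lambert_eq_lambertHalf_sub (h0 : 0 < q) (h1 : q < 1) :
    ∑' n : ℤ, (-1 : ℝ) ^ n * q ^ (3 * n ^ 2 + 6 * n + 1) / (1 - q ^ (6 * n + 2)) =
      lambertHalf q 0 - lambertHalf q 1 := by
  have hY := summable_lambertY h0.le h1
  have hZ := summable_lambertZ h0.le h1
  have halt {f : ℕ → ℝ} (hf : Summable f) : Summable fun n => (-1) ^ n * f n :=
    summable_abs_iff.1 (by simpa [abs_mul] using summable_abs_iff.2 hf)
  have hnat := funext (lambert_term_natCast q)
  have hneg := funext (lambert_term_neg_succ h0.ne')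
  rw [tsum_of_nat_of_neg_add_one (hnat ▸ halt hY) (hneg ▸ halt hZ), hnat, hneg,
    ← (halt hY).tsum_add (halt hZ)]
  simp_rw [← mul_add]
  rw [tsum_neg_one_pow_mul (hY.add hZ)]
  simp [lambertHalf]

end Lambert

def yExp (n j : ℕ) : ℕ := 3 * n ^ 2 + 6 * n + 1 + (6 * n + 2) * j

def zExp (n j : ℕ) : ℕ := 3 * n ^ 2 + 6 * n + 2 + (6 * n + 4) * j

/-- The exponent of `q` in the term indexed by `x = (c, k, j)` of
`(∑_c p̄(c) q^{3c}) · ∑_{k,j} q^{e (2k + r) j}`. -/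
def weight (e : ℕ → ℕ → ℕ) (r : ℕ) (x : ℕ × ℕ × ℕ) : ℕ := 3 * x.1 + e (2 * x.2.1 + r) x.2.2

noncomputable def lambertCoeff (r n : ℕ) : ℝ≥0∞ :=
  fiberSum (fun x => (overpartCount x.1 : ℝ≥0∞)) (weight yExp r) n +
    fiberSum (fun x => (overpartCount x.1 : ℝ≥0∞)) (weight zExp r) n

lemma ofReal_lambertHalf {q : ℝ} (h0 : 0 ≤ q) (h1 : q < 1) (r : ℕ) :
    ENNReal.ofReal (lambertHalf q r) = ∑' p : ℕ × ℕ,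
      (ENNReal.ofReal q ^ yExp (2 * p.1 + r) p.2 +
        ENNReal.ofReal q ^ zExp (2 * p.1 + r) p.2) := by
  have hinj : Injective fun k => 2 * k + r := fun a b h => by simp only at h; omega
  have hs : Summable fun k => lambertY q (2 * k + r) + lambertZ q (2 * k + r) :=
    ((summable_lambertY h0 h1).comp_injective hinj).add
      ((summable_lambertZ h0 h1).comp_injective hinj)
  rw [lambertHalf, ENNReal.ofReal_tsum_of_nonneg (fun k => add_nonneg
    (lambertY_nonneg h0 h1 _) (lambertZ_nonneg h0 h1 _)) hs, ENNReal.tsum_prod']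
  refine tsum_congr fun k => ?_
  rw [ENNReal.ofReal_add (lambertY_nonneg h0 h1 _) (lambertZ_nonneg h0 h1 _), lambertY,
    lambertZ, ENNReal.ofReal_pow_div_one_sub_pow h0 h1 _ (by omega),
    ENNReal.ofReal_pow_div_one_sub_pow h0 h1 _ (by omega), ← ENNReal.tsum_add]
  rfl

lemma ofReal_mul_lambertHalf {q : ℝ} (h0 : 0 ≤ q) (h1 : q < 1) (r : ℕ) :
    ENNReal.ofReal (pochR (-(q ^ 3)) (q ^ 3) / pochR (q ^ 3) (q ^ 3) * lambertHalf q r) =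
      ∑' n, lambertCoeff r n * ENNReal.ofReal q ^ n := by
  have h3 : q ^ 3 < 1 := pow_lt_one₀ h0 h1 (by norm_num)
  rw [ENNReal.ofReal_mul (pochR_neg_div_pochR_nonneg (pow_nonneg h0 3) h3),
    ofReal_pochR_neg_div_pochR (pow_nonneg h0 3) h3, ofReal_lambertHalf h0 h1,
    ENNReal.tsum_mul_tsum]
  simp_rw [ENNReal.ofReal_pow h0, ← pow_mul, mul_add, mul_assoc, ← pow_add]
  simp_rw [lambertCoeff, add_mul]
  rw [ENNReal.tsum_add, ENNReal.tsum_add, ← tsum_mul_pow_eq_tsum_fiberSum,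
    ← tsum_mul_pow_eq_tsum_fiberSum]
  rfl

/-- Moving from `2k` to `2k + 1` multiplies each Lambert term by `q^{3 (4k + 3 + 2j)}`. -/
def shift (x : ℕ × ℕ × ℕ) : ℕ × ℕ × ℕ := (x.1 + (4 * x.2.1 + 3 + 2 * x.2.2), x.2)

lemma shift_injective : Injective shift := fun x y h => by
  obtain ⟨h1, h2⟩ := Prod.mk.inj h
  exact Prod.ext (by rw [h2] at h1; omega) h2

lemma weight_shift {e : ℕ → ℕ → ℕ}
    (he : ∀ k j, e (2 * k + 1) j = e (2 * k) j + 3 * (4 * k + 3 + 2 * j)) (x : ℕ × ℕ × ℕ) :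
    weight e 0 (shift x) = weight e 1 x := by
  simp only [weight, shift, add_zero, he]
  ring

lemma lambertCoeff_one_le_zero : lambertCoeff 1 ≤ lambertCoeff 0 := fun n => by
  have hg (x : ℕ × ℕ × ℕ) : (overpartCount x.1 : ℝ≥0∞) ≤ overpartCount (shift x).1 :=
    Nat.cast_le.2 (overpartCount_mono (Nat.le_add_right _ _))
  have hy : ∀ k j, yExp (2 * k + 1) j = yExp (2 * k) j + 3 * (4 * k + 3 + 2 * j) :=
    fun k j => by simp only [yExp]; ring
  have hz : ∀ k j, zExp (2 * k + 1) j = zExp (2 * k) j + 3 * (4 * k + 3 + 2 * j) :=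
    fun k j => by simp only [zExp]; ring
  exact add_le_add (fiberSum_le_of_injective shift shift_injective (weight_shift hy) hg n)
    (fiberSum_le_of_injective shift shift_injective (weight_shift hz) hg n)

end OverpartitionLambert

theorem stmt_19 :
    ∃ a : ℕ → ℝ, (∀ n, 0 ≤ a n) ∧
      ∀ q : ℝ, 0 < q → q < 1 →
        pochR (-(q ^ 3)) (q ^ 3) / pochR (q ^ 3) (q ^ 3) *
            (∑' n : ℤ, (-1 : ℝ) ^ n * q ^ (3 * n ^ 2 + 6 * n + 1) / (1 - q ^ (6 * n + 2))) =
          ∑' n : ℕ, a n * q ^ n := by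
  open OverpartitionLambert in
  refine ⟨fun n => (lambertCoeff 0 n - lambertCoeff 1 n).toReal, fun n => ENNReal.toReal_nonneg,
    fun q h0 h1 => ?_⟩
  have hP := pochR_neg_div_pochR_nonneg (pow_nonneg h0.le 3) (pow_lt_one₀ h0.le h1 (by norm_num))
  rw [tsum_lambert_eq_lambertHalf_sub h0 h1, mul_sub]
  exact (ENNReal.hasSum_toReal_tsub_mul_pow (mul_nonneg hP (lambertHalf_nonneg h0.le h1 0))
    (mul_nonneg hP (lambertHalf_nonneg h0.le h1 1)) h0 lambertCoeff_one_le_zero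
    (ofReal_mul_lambertHalf h0.le h1 0) (ofReal_mul_lambertHalf h0.le h1 1)).tsum_eq.symm
end
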